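/- arXiv:2302.12929 — 3 statements merged into one kernel-verified Lean document; each statement's English description precedes it below -/
import Mathlib

section
/- Every DSRI positive semi-definite kernel on ℤ₊ × ℤ₊ is stable: if ∑_{t∈ℕ} k(t,t)^{1/2} < ∞, then for every bounded sequence u : ℕ → ℝ, ∑_{t∈ℕ} |∑_{s∈ℕ} u(s) k(t,s)| < ∞. -/
def IsPSDKernel (k : ℕ → ℕ → ℝ) : Prop :=
  (∀ s t, k s t = k t s) ∧
  ∀ (n : ℕ) (t : Fin n → ℕ) (a : Fin n → ℝ),
    0 ≤ ∑ i, ∑ j, a i * k (t i) (t j) * a j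

/-!
Positive semi-definiteness gives the Cauchy–Schwarz bound `|k t s| ≤ √(k t t) √(k s s)`, so `k` is
dominated by the rank-one kernel `g t g s` with `g = √diag k` summable. Against a bounded input `u`,
each row sum is then at most `C g t ∑ g`, which is summable in `t`.
-/

namespace IsPSDKernel

variable {k : ℕ → ℕ → ℝ}

theorem quadratic_nonneg (hk : IsPSDKernel k) (t s : ℕ) (x : ℝ) :
    0 ≤ k t t * (x * x) + 2 * k t s * x + k s s := by
  have h := hk.2 2 ![t, s] ![x, 1]
  simp only [Fin.sum_univ_two, Matrix.cons_val_zero, Matrix.cons_val_one] at h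
  rw [hk.1 s t] at h
  linarith

theorem diag_nonneg (hk : IsPSDKernel k) (t : ℕ) : 0 ≤ k t t := by
  simpa using hk.2 1 (fun _ => t) (fun _ => 1)

theorem sq_le_mul_diag (hk : IsPSDKernel k) (t s : ℕ) : k t s ^ 2 ≤ k t t * k s s := by
  have h := discrim_le_zero (hk.quadratic_nonneg t s)
  rw [discrim] at h
  linarith

theorem abs_le_sqrt_mul_sqrt (hk : IsPSDKernel k) (t s : ℕ) :
    |k t s| ≤ √(k t t) * √(k s s) := by
  rw [← Real.sqrt_mul (hk.diag_nonneg t)]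
  exact Real.abs_le_sqrt (hk.sq_le_mul_diag t s)

end IsPSDKernel

section SeparablyBounded

variable {ι κ : Type*} {k : ι → κ → ℝ} {f : ι → ℝ} {g : κ → ℝ} {u : κ → ℝ} {C : ℝ}

theorem abs_mul_le_of_abs_le_mul (hkfg : ∀ t s, |k t s| ≤ f t * g s) (hu : ∀ s, |u s| ≤ C)
    (t : ι) (s : κ) : |u s * k t s| ≤ C * f t * g s := by
  rw [abs_mul, mul_assoc]
  exact mul_le_mul (hu s) (hkfg t s) (abs_nonneg _) ((abs_nonneg _).trans (hu s))

theorem summable_mul_of_abs_le_mul (hkfg : ∀ t s, |k t s| ≤ f t * g s) (hu : ∀ s, |u s| ≤ C)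
    (hg : Summable g) (t : ι) : Summable fun s => u s * k t s :=
  (hg.mul_left (C * f t)).of_norm_bounded (abs_mul_le_of_abs_le_mul hkfg hu t)

theorem abs_tsum_mul_le_of_abs_le_mul (hkfg : ∀ t s, |k t s| ≤ f t * g s)
    (hu : ∀ s, |u s| ≤ C) (hg : Summable g) (t : ι) :
    |∑' s, u s * k t s| ≤ C * f t * ∑' s, g s :=
  tsum_of_norm_bounded (f := fun s => u s * k t s) (hg.hasSum.mul_left (C * f t))
    (abs_mul_le_of_abs_le_mul hkfg hu t)

theorem summable_abs_tsum_mul_of_abs_le_mul (hkfg : ∀ t s, |k t s| ≤ f t * g s)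
    (hu : ∀ s, |u s| ≤ C) (hf : Summable f) (hg : Summable g) :
    Summable fun t => |∑' s, u s * k t s| :=
  ((hf.mul_left C).mul_right _).of_nonneg_of_le (fun _ => abs_nonneg _)
    (abs_tsum_mul_le_of_abs_le_mul hkfg hu hg)

end SeparablyBounded

theorem stmt6 (k : ℕ → ℕ → ℝ) (hk : IsPSDKernel k)
    (hkS : Summable fun t => Real.sqrt (k t t))
    (u : ℕ → ℝ) (hu : ∃ C : ℝ, ∀ s, |u s| ≤ C) :
    (∀ t, Summable fun s => u s * k t s) ∧
    Summable (fun t => |∑' s : ℕ, u s * k t s|) := by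
  obtain ⟨C, hC⟩ := hu
  exact ⟨summable_mul_of_abs_le_mul hk.abs_le_sqrt_mul_sqrt hC hkS,
    summable_abs_tsum_mul_of_abs_le_mul hk.abs_le_sqrt_mul_sqrt hC hkS hkS⟩
end

section
/- There exists a positive semi-definite kernel on ℤ₊ × ℤ₊ that is integrable but not DSRI; concretely, k(s,t) = 1/(1+s)² if s = t and k(s,t) = 0 otherwise satisfies: k is positive semi-definite, ∑_{s,t} |k(s,t)| = π²/6 < ∞, and ∑_t k(t,t)^{1/2} = ∑_t 1/(1+t) = ∞. -/
noncomputable def diagKernel (s t : ℕ) : ℝ :=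
  if s = t then 1 / ((1 : ℝ) + s) ^ 2 else 0

/-!
The kernel is diagonal with nonnegative diagonal, so its quadratic form on any finite selection is
a sum of squares weighted by the diagonal entries (grouping equal points). The double series lives
on the diagonal, where it is the Basel series, while the square roots of the diagonal form the
harmonic series.
-/

open Finset

theorem sum_sum_mul_ite_eq_mul_eq_sum_sq {ι α : Type*} [Fintype ι] [DecidableEq α]
    (t : ι → α) (d : α → ℝ) (a : ι → ℝ) :
    ∑ i, ∑ j, a i * (if t i = t j then d (t i) else 0) * a j =
      ∑ v ∈ univ.image t, d v * (∑ i with t i = v, a i) ^ 2 := by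
  rw [← sum_fiberwise_of_maps_to (t := univ.image t) (g := t)
    fun i _ => mem_image_of_mem t (mem_univ i)]
  refine sum_congr rfl fun v _ => ?_
  calc ∑ i with t i = v, ∑ j, a i * (if t i = t j then d (t i) else 0) * a j
      = ∑ i with t i = v, a i * d v * ∑ j with t j = v, a j := by
        refine sum_congr rfl fun i hi => ?_
        rw [(mem_filter.1 hi).2, mul_sum, sum_filter]
        refine sum_congr rfl fun j _ => ?_
        by_cases h : t j = v
        · simp [h]
        · simp [h, Ne.symm h]
    _ = d v * (∑ i with t i = v, a i) ^ 2 := by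
        rw [← sum_mul, ← sum_mul]; ring

theorem isPSDKernel_ite_eq {d : ℕ → ℝ} (hd : 0 ≤ d) :
    IsPSDKernel fun s t => if s = t then d s else 0 := by
  refine ⟨fun s t => ?_, fun n t a => ?_⟩
  · by_cases h : s = t
    · simp [h]
    · simp [h, Ne.symm h]
  · rw [sum_sum_mul_ite_eq_mul_eq_sum_sq]
    exact sum_nonneg fun v _ => mul_nonneg (hd v) (sq_nonneg _)

theorem hasSum_diag_ite_iff {α M : Type*} [AddCommMonoid M] [TopologicalSpace M]
    [DecidableEq α] {f : α → M} {m : M} :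
    HasSum (fun p : α × α => if p.1 = p.2 then f p.1 else 0) m ↔ HasSum f m := by
  rw [← Function.Injective.hasSum_iff (g := fun x : α => (x, x))
    (fun _ _ h => congrArg Prod.fst h) fun p hp => if_neg fun h => hp ⟨p.1, Prod.ext rfl h⟩]
  simp [Function.comp_def]

theorem hasSum_one_div_one_add_sq :
    HasSum (fun n : ℕ => 1 / ((1 : ℝ) + n) ^ 2) (Real.pi ^ 2 / 6) := by
  -- the dropped `n = 0` term of `hasSum_zeta_two` is the junk value `1 / 0 ^ 2 = 0`
  simpa [add_comm] using (hasSum_nat_add_iff' 1).2 hasSum_zeta_two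

theorem diagKernel_nonneg (s t : ℕ) : 0 ≤ diagKernel s t := by
  unfold diagKernel
  split_ifs <;> positivity

theorem isPSDKernel_diagKernel : IsPSDKernel diagKernel :=
  isPSDKernel_ite_eq (d := fun s : ℕ => 1 / ((1 : ℝ) + s) ^ 2) fun _ => by positivity

theorem hasSum_diagKernel : HasSum (fun p : ℕ × ℕ => diagKernel p.1 p.2) (Real.pi ^ 2 / 6) :=
  hasSum_diag_ite_iff (f := fun s : ℕ => 1 / ((1 : ℝ) + s) ^ 2) |>.2 hasSum_one_div_one_add_sq

theorem not_summable_sqrt_diagKernel : ¬ Summable fun t : ℕ => Real.sqrt (diagKernel t t) := by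
  have h : (fun t : ℕ => Real.sqrt (diagKernel t t)) =
      fun t : ℕ => 1 / |(t : ℝ) + 1| ^ (1 : ℝ) := by
    ext t
    rw [diagKernel, if_pos rfl, Real.rpow_one, abs_of_pos (by positivity), one_div, Real.sqrt_inv,
      Real.sqrt_sq (by positivity), add_comm, one_div]
  rw [h, Real.summable_one_div_nat_add_rpow]
  exact lt_irrefl 1

theorem stmt7 :
    IsPSDKernel diagKernel ∧
    Summable (fun p : ℕ × ℕ => |diagKernel p.1 p.2|) ∧
    ∑' p : ℕ × ℕ, |diagKernel p.1 p.2| = Real.pi ^ 2 / 6 ∧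
    ¬ Summable (fun t : ℕ => Real.sqrt (diagKernel t t)) := by
  have hsum : HasSum (fun p : ℕ × ℕ => |diagKernel p.1 p.2|) (Real.pi ^ 2 / 6) := by
    simpa only [abs_of_nonneg (diagKernel_nonneg _ _)] using hasSum_diagKernel
  exact ⟨isPSDKernel_diagKernel, hsum.summable, hsum.tsum_eq, not_summable_sqrt_diagKernel⟩
end

section
/- Let (gₜ)_{t∈ℕ} be a family of jointly Gaussian random variables on a probability space with mean zero and covariance E[g_s g_t] = k(s,t) for a positive semi-definite kernel k. If P[∑_{t∈ℕ} |g_t| < ∞] > 0, then k is DSRI, i.e., ∑_{t∈ℕ} k(t,t)^{1/2} < ∞. Moreover the bound ∑_t k(t,t)^{1/2} ≤ 2r/(γ ε) holds, where γ = P[∑_t |g_t| ≤ r] > 0 for some r ∈ ℕ and ε = Φ^{-1}(γ/2), with Φ(δ) = P[|Z| ≤ δ] for a standard Gaussian Z. -/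
open MeasureTheory ProbabilityTheory

/-- Φ(δ) = P[|Z| ≤ δ] for a standard Gaussian Z. -/
noncomputable def gaussPhi (δ : ℝ) : ℝ :=
  ((gaussianReal 0 1) (Set.Icc (-δ) δ)).toReal

/-!
Countable subadditivity gives `r : ℕ` with `γ = P[A] > 0` for `A = {∑ |g t| ≤ r}`. Each `g t`
is `√(k t t)` times a standard Gaussian, so `|g t| ≤ ε √(k t t)` has probability exactly `Φ(ε)`.
Choosing `Φ(ε) = γ / 2` leaves a part of `A` of probability at least `γ / 2` on which
`|g t| > ε √(k t t)`, so `∫_A |g t| ≥ ε √(k t t) γ / 2`. Summing over `t` (Tonelli) and using `∫_A ∑ |g t| ≤ r γ` gives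
`(ε γ / 2) ∑ √(k t t) ≤ r γ`.
-/

open Filter Set Topology
open scoped ENNReal NNReal

lemma summable_and_tsum_le_iff_tsum_ofReal_le {ι : Type*} {f : ι → ℝ} (hf : ∀ t, 0 ≤ f t)
    {r : ℝ} (hr : 0 ≤ r) :
    (Summable f ∧ ∑' t, f t ≤ r) ↔ ∑' t, ENNReal.ofReal (f t) ≤ ENNReal.ofReal r := by
  constructor
  · rintro ⟨hs, hle⟩
    rw [← ENNReal.ofReal_tsum_of_nonneg hf hs]
    exact ENNReal.ofReal_le_ofReal hle
  · intro h
    have hs : Summable f := by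
      have := ENNReal.tsum_coe_ne_top_iff_summable.1 (h.trans_lt ENNReal.ofReal_lt_top).ne
      exact (NNReal.summable_coe.2 this).congr fun t => Real.coe_toNNReal _ (hf t)
    refine ⟨hs, ?_⟩
    rwa [← ENNReal.ofReal_tsum_of_nonneg hf hs, ENNReal.ofReal_le_ofReal_iff hr] at h

lemma gaussPhi_zero : gaussPhi 0 = 0 := by
  rw [gaussPhi, neg_zero, Icc_self,
    gaussianReal_absolutelyContinuous 0 one_ne_zero (measure_singleton 0), ENNReal.toReal_zero]

lemma gaussPhi_eq_intervalIntegral {δ : ℝ} (hδ : 0 ≤ δ) :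
    gaussPhi δ = ∫ x in (-δ)..δ, gaussianPDFReal 0 1 x := by
  rw [gaussPhi, gaussianReal_apply_eq_integral 0 one_ne_zero, ENNReal.toReal_ofReal
      (setIntegral_nonneg measurableSet_Icc fun x _ => gaussianPDFReal_nonneg 0 1 x),
    integral_Icc_eq_integral_Ioc, intervalIntegral.integral_of_le (by linarith)]

lemma continuousOn_gaussPhi : ContinuousOn gaussPhi (Ici 0) := by
  have hF := (integrable_gaussianPDFReal 0 1).continuous_primitive 0
  refine ((hF.sub (hF.comp continuous_neg)).continuousOn).congr fun δ hδ => ?_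
  rw [gaussPhi_eq_intervalIntegral hδ]
  exact (intervalIntegral.integral_interval_sub_left
    (integrable_gaussianPDFReal 0 1).intervalIntegrable
    (integrable_gaussianPDFReal 0 1).intervalIntegrable).symm

lemma tendsto_gaussPhi_atTop : Tendsto gaussPhi atTop (𝓝 1) := by
  have hmono : Monotone fun δ : ℝ => Icc (-δ) δ := fun a b hab =>
    Icc_subset_Icc (neg_le_neg hab) hab
  have hunion : ⋃ δ : ℝ, Icc (-δ) δ = univ :=
    eq_univ_of_forall fun x => mem_iUnion.2 ⟨|x|, abs_le.1 le_rfl⟩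
  have h := tendsto_measure_iUnion_atTop (μ := gaussianReal 0 1) hmono
  rw [hunion, measure_univ] at h
  exact (ENNReal.tendsto_toReal ENNReal.one_ne_top).comp h

lemma exists_pos_gaussPhi_eq {a : ℝ} (h0 : 0 < a) (h1 : a < 1) :
    ∃ ε, 0 < ε ∧ gaussPhi ε = a := by
  obtain ⟨M, hM0, hM⟩ :=
    ((eventually_ge_atTop 0).and (tendsto_gaussPhi_atTop.eventually (eventually_gt_nhds h1))).exists
  obtain ⟨ε, hε, hεa⟩ := intermediate_value_Ioo hM0
    (continuousOn_gaussPhi.mono Icc_subset_Ici_self) ⟨by rwa [gaussPhi_zero], hM⟩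
  exact ⟨ε, hε.1, hεa⟩

lemma gaussianReal_Icc_mul_sqrt {v : ℝ≥0} (hv : v ≠ 0) (ε : ℝ) :
    gaussianReal 0 v (Icc (-(ε * √v)) (ε * √v)) = gaussianReal 0 1 (Icc (-ε) ε) := by
  have hσ : 0 < √(v : ℝ) := Real.sqrt_pos.2 (NNReal.coe_pos.2 (pos_iff_ne_zero.2 hv))
  have hscale := gaussianReal_map_const_mul (μ := 0) (v := 1) √v
  have hvar : NNReal.mk (√(v : ℝ) ^ 2) (sq_nonneg _) * 1 = v := by ext; simp
  rw [mul_zero, hvar] at hscale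
  rw [← hscale, Measure.map_apply (measurable_const_mul _) measurableSet_Icc,
    preimage_const_mul_Icc₀ _ _ hσ, neg_div, mul_div_cancel_right₀ _ hσ.ne']

section

variable {Ω : Type*} [MeasurableSpace Ω] {μ : Measure Ω}

lemma exists_nat_measure_summable_and_tsum_le_pos {ι : Type*} {f : ι → Ω → ℝ}
    (h : 0 < μ {ω | Summable (f · ω)}) :
    ∃ r : ℕ, 0 < μ {ω | Summable (f · ω) ∧ ∑' t, f t ω ≤ r} := by
  by_contra! hnull
  refine h.ne' (measure_mono_null (fun ω hω => ?_)
    (measure_iUnion_null fun r => nonpos_iff_eq_zero.1 (hnull r)))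
  obtain ⟨r, hr⟩ := exists_nat_ge (∑' t, f t ω)
  exact mem_iUnion.2 ⟨r, hω, hr⟩

lemma ofReal_mul_measure_sub_le_setLIntegral_abs {X : Ω → ℝ} (hX : Measurable X) (A : Set Ω)
    (c : ℝ) :
    ENNReal.ofReal c * (μ A - μ {ω | |X ω| ≤ c}) ≤ ∫⁻ ω in A, ENNReal.ofReal |X ω| ∂μ := by
  have hbig : μ A - μ {ω | |X ω| ≤ c} ≤
      μ.restrict A {ω | ENNReal.ofReal c ≤ ENNReal.ofReal |X ω|} := by
    rw [tsub_le_iff_right]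
    calc μ A ≤ μ ({ω | ENNReal.ofReal c ≤ ENNReal.ofReal |X ω|} ∩ A ∪ {ω | |X ω| ≤ c}) :=
          measure_mono fun ω hω => (le_or_gt |X ω| c).elim Or.inr
            fun hlt => Or.inl ⟨ENNReal.ofReal_le_ofReal hlt.le, hω⟩
      _ ≤ _ := (measure_union_le _ _).trans (add_le_add_left (Measure.le_restrict_apply _ _) _)
  calc _ ≤ ENNReal.ofReal c * μ.restrict A {ω | ENNReal.ofReal c ≤ ENNReal.ofReal |X ω|} :=
        by gcongr
    _ ≤ _ := mul_meas_ge_le_lintegral₀ hX.abs.ennreal_ofReal.aemeasurable _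

lemma ofReal_mul_sqrt_mul_sub_le_setLIntegral_abs {X : Ω → ℝ} (hX : Measurable X) {v : ℝ}
    (hlaw : μ.map X = gaussianReal 0 v.toNNReal) (A : Set Ω) (ε : ℝ) :
    ENNReal.ofReal (ε * √v) * (μ A - gaussianReal 0 1 (Icc (-ε) ε)) ≤
      ∫⁻ ω in A, ENNReal.ofReal |X ω| ∂μ := by
  rcases le_or_gt v 0 with hv | hv
  · simp [Real.sqrt_eq_zero'.2 hv]
  have hsmall : μ {ω | |X ω| ≤ ε * √v} = gaussianReal 0 1 (Icc (-ε) ε) := by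
    have hpre : {ω | |X ω| ≤ ε * √v} = X ⁻¹' Icc (-(ε * √v)) (ε * √v) := by
      ext ω; simp [abs_le]
    have hscaled := gaussianReal_Icc_mul_sqrt (Real.toNNReal_pos.2 hv).ne' ε
    rwa [Real.coe_toNNReal v hv.le, ← hlaw, Measure.map_apply hX measurableSet_Icc, ← hpre]
      at hscaled
  rw [← hsmall]
  exact ofReal_mul_measure_sub_le_setLIntegral_abs hX A _

lemma tsum_setLIntegral_abs_le {ι : Type*} [Countable ι] {g : ι → Ω → ℝ}
    (hg : ∀ t, Measurable (g t)) {r : ℝ} (hr : 0 ≤ r) :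
    ∑' t, ∫⁻ ω in {ω | Summable (|g · ω|) ∧ ∑' s, |g s ω| ≤ r}, ENNReal.ofReal |g t ω| ∂μ ≤
      ENNReal.ofReal r * μ {ω | Summable (|g · ω|) ∧ ∑' s, |g s ω| ≤ r} := by
  rw [← lintegral_tsum fun t => (hg t).abs.ennreal_ofReal.aemeasurable, ← setLIntegral_const]
  exact setLIntegral_mono measurable_const fun ω hω =>
    (summable_and_tsum_le_iff_tsum_ofReal_le (fun t => abs_nonneg _) hr).1 hω

end

theorem stmt19_general {Ω : Type*} [MeasurableSpace Ω] (P : Measure Ω) [IsProbabilityMeasure P]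
    (k : ℕ → ℕ → ℝ)
    (g : ℕ → Ω → ℝ) (hmeas : ∀ t, Measurable (g t))
    (hgauss : ∀ t, P.map (g t) = gaussianReal 0 (Real.toNNReal (k t t)))
    (hpos : 0 < P {ω | Summable fun t => |g t ω|}) :
    Summable (fun t => Real.sqrt (k t t)) ∧
    ∃ (r : ℕ) (γ ε : ℝ), 0 < γ ∧
      γ = (P {ω | Summable (fun t => |g t ω|) ∧ ∑' t : ℕ, |g t ω| ≤ r}).toReal ∧
      gaussPhi ε = γ / 2 ∧
      ∑' t : ℕ, Real.sqrt (k t t) ≤ 2 * r / (γ * ε) := by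
  obtain ⟨r, hr⟩ := exists_nat_measure_summable_and_tsum_le_pos (f := fun t ω => |g t ω|) hpos
  set A := {ω | Summable (fun t => |g t ω|) ∧ ∑' t : ℕ, |g t ω| ≤ (r : ℝ)}
  set γ := (P A).toReal
  have hγ : 0 < γ := ENNReal.toReal_pos hr.ne' (measure_ne_top P A)
  have hγ1 : γ ≤ 1 := ENNReal.toReal_le_of_le_ofReal zero_le_one (by simpa using prob_le_one)
  obtain ⟨ε, hε, hΦ⟩ := exists_pos_gaussPhi_eq (half_pos hγ) (by linarith)
  have hgap : P A - gaussianReal 0 1 (Icc (-ε) ε) = ENNReal.ofReal (γ / 2) := by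
    rw [← ENNReal.ofReal_toReal (measure_ne_top P A),
      ← ENNReal.ofReal_toReal (measure_ne_top _ (Icc (-ε) ε)), ← gaussPhi, hΦ,
      ← ENNReal.ofReal_sub _ (by positivity)]
    exact congrArg _ (sub_half γ)
  have hbound : ∑' t, ENNReal.ofReal (√(k t t) * (ε * (γ / 2))) ≤ ENNReal.ofReal (r * γ) :=
    calc _ = ∑' t, ENNReal.ofReal (ε * √(k t t)) * (P A - gaussianReal 0 1 (Icc (-ε) ε)) :=
          tsum_congr fun t => by
            rw [hgap, ← ENNReal.ofReal_mul (by positivity)]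
            ring_nf
      _ ≤ ∑' t, ∫⁻ ω in A, ENNReal.ofReal |g t ω| ∂P := ENNReal.tsum_le_tsum fun t =>
          ofReal_mul_sqrt_mul_sub_le_setLIntegral_abs (hmeas t) (hgauss t) A ε
      _ ≤ ENNReal.ofReal r * P A := tsum_setLIntegral_abs_le hmeas r.cast_nonneg
      _ = ENNReal.ofReal (r * γ) := by
          rw [ENNReal.ofReal_mul r.cast_nonneg, ENNReal.ofReal_toReal (measure_ne_top P A)]
  obtain ⟨hsum, hle⟩ :=
    (summable_and_tsum_le_iff_tsum_ofReal_le (fun t => by positivity) (by positivity)).2 hbound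
  rw [summable_mul_right_iff (by positivity)] at hsum
  rw [tsum_mul_right] at hle
  refine ⟨hsum, r, γ, ε, hγ, rfl, hΦ, ?_⟩
  rw [le_div_iff₀ (by positivity)]
  nlinarith [mul_le_mul_of_nonneg_left hγ1 r.cast_nonneg]

theorem stmt19 {Ω : Type*} [MeasurableSpace Ω] (P : Measure Ω) [IsProbabilityMeasure P]
    (k : ℕ → ℕ → ℝ) (hk : IsPSDKernel k)
    (g : ℕ → Ω → ℝ) (hmeas : ∀ t, Measurable (g t))
    (hgauss : ∀ t, P.map (g t) = gaussianReal 0 (Real.toNNReal (k t t)))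
    (hcov : ∀ s t, ∫ ω, g s ω * g t ω ∂P = k s t)
    (hpos : 0 < P {ω | Summable fun t => |g t ω|}) :
    Summable (fun t => Real.sqrt (k t t)) ∧
    ∃ (r : ℕ) (γ ε : ℝ), 0 < γ ∧
      γ = (P {ω | Summable (fun t => |g t ω|) ∧ ∑' t : ℕ, |g t ω| ≤ r}).toReal ∧
      gaussPhi ε = γ / 2 ∧
      ∑' t : ℕ, Real.sqrt (k t t) ≤ 2 * r / (γ * ε) :=
  stmt19_general P k g hmeas hgauss hpos
end
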